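/- arXiv:1012.5315 — 4 statements merged into one kernel-verified Lean document; each statement's English description precedes it below -/
import Mathlib

section
/- Let S ⊆ Σ(2) = {0,1}^ℤ be the set consisting of the bi-infinite sequences with exactly one symbol '1' together with the periodic sequences having at most one '1' in a minimal period. Then S is closed, shift-invariant, and the number of period-n points of the shift restricted to S equals σ(n) + 1, where σ(n) is the sum of the divisors of n. -/
private def ap (d : ℕ) (r : ℤ) : ℤ → Fin 2 := fun i => if (d : ℤ) ∣ i - r then 1 else 0

private lemma fin2_cases (x : Fin 2) : x = 0 ∨ x = 1 := by fin_cases x <;> simp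

private lemma ap_eq_one_iff {d : ℕ} {r i : ℤ} : ap d r i = 1 ↔ (d : ℤ) ∣ i - r := by
  unfold ap; split <;> simp_all

/-- Let `S ⊆ {0,1}^ℤ` consist of the bi-infinite sequences with exactly one symbol `1`
together with the periodic sequences having at most one `1` in a minimal period (the zero
sequence, and the sequences whose `1`s form exactly an arithmetic progression). Then `S` is
closed, invariant under the shift, and the number of period-`n` points of the shift in `S`
equals `σ(n) + 1`, the sum of the divisors of `n` plus one. -/
theorem closed_invariant_set_with_sigma_periodic_points
    (σ : (ℤ → Fin 2) → (ℤ → Fin 2)) (hσ : ∀ a i, σ a i = a (i + 1))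
    (S : Set (ℤ → Fin 2))
    (hS : S = {a : ℤ → Fin 2 |
        (∃! i : ℤ, a i = 1) ∨ (∀ i : ℤ, a i = 0) ∨
        ∃ d : ℕ, 0 < d ∧ ∃ r : ℤ, ∀ i : ℤ, (a i = 1 ↔ (d : ℤ) ∣ (i - r))}) :
    IsClosed S ∧ σ '' S = S ∧
      ∀ n : ℕ, 0 < n →
        Nat.card {a : ℤ → Fin 2 | a ∈ S ∧ σ^[n] a = a} = (∑ d ∈ n.divisors, d) + 1 := by
  have hiter : ∀ (n : ℕ) (a : ℤ → Fin 2) (i : ℤ), σ^[n] a i = a (i + n) := by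
    intro n
    induction n with
    | zero => simp
    | succ n ih =>
      intro a i
      rw [Function.iterate_succ_apply', hσ, ih]
      congr 1
      push_cast
      ring
  -- membership is preserved by arbitrary shifts
  have hshift : ∀ (c : ℤ) (a : ℤ → Fin 2), a ∈ S → (fun i => a (i + c)) ∈ S := by
    intro c a ha
    rw [hS] at ha ⊢
    rcases ha with ⟨i0, h1, hu⟩ | h0 | ⟨d, hd, r, hr⟩
    · left
      refine ⟨i0 - c, by simpa using h1, fun j hj => ?_⟩
      have := hu (j + c) hj
      omega
    · right; left; intro i; exact h0 _
    · right; right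
      refine ⟨d, hd, r - c, fun i => ?_⟩
      have := hr (i + c)
      constructor
      · intro h; have h2 := this.mp h; have : i - (r - c) = i + c - r := by ring
        rw [this]; exact h2
      · intro h; apply this.mpr; have : i + c - r = i - (r - c) := by ring
        rw [this]; exact h
  refine ⟨?_, ?_, ?_⟩
  · -- closedness
    rw [← isOpen_compl_iff, isOpen_iff_mem_nhds]
    intro a ha
    rw [hS] at ha
    simp only [Set.mem_compl_iff, Set.mem_setOf_eq] at ha
    push_neg at ha
    obtain ⟨h1, h2, h3⟩ := ha
    obtain ⟨p, hp0⟩ := h2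
    have hp : a p = 1 := (fin2_cases (a p)).resolve_left hp0
    obtain ⟨q, hq, hqp⟩ : ∃ q, a q = 1 ∧ q ≠ p := by
      by_contra h; push_neg at h
      exact h1 ⟨p, hp, fun j hj => h j hj⟩
    choose w hw using fun (d : ℕ) (hd : 0 < d) => h3 d hd p
    set d0 : ℕ := (q - p).natAbs with hd0def
    have hd0pos : 0 < d0 := by
      rw [hd0def]; rw [Int.natAbs_pos]; omega
    classical
    set F : Finset ℤ :=
      insert p (insert q (d0.divisors.attach.image
        (fun d => w d.1 (Nat.pos_of_mem_divisors d.2)))) with hF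
    have hsub : (↑F : Set ℤ).pi (fun i => {a i}) ⊆ Sᶜ := by
      intro b hb
      have hbF : ∀ i ∈ F, b i = a i := by
        intro i hi; exact hb i hi
      have hbp : b p = 1 := by rw [hbF p (by simp [hF]), hp]
      have hbq : b q = 1 := by rw [hbF q (by simp [hF]), hq]
      intro hbS
      rw [hS] at hbS
      rcases hbS with ⟨i0, hi1, hiu⟩ | h0 | ⟨d, hd, r, hr⟩
      · exact hqp ((hiu q hbq).trans (hiu p hbp).symm)
      · exact absurd (h0 p) (by rw [hbp]; decide)
      · have hdp : (d : ℤ) ∣ p - r := (hr p).mp hbp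
        have hdq : (d : ℤ) ∣ q - r := (hr q).mp hbq
        have hdqp : (d : ℤ) ∣ q - p := by
          have := hdq.sub hdp; simpa using this
        have hdd0 : d ∣ d0 := by
          rw [hd0def]
          exact Int.natCast_dvd_natCast.mp (Int.dvd_natAbs.mpr hdqp)
        have hdmem : d ∈ d0.divisors := Nat.mem_divisors.mpr ⟨hdd0, hd0pos.ne'⟩
        set i := w d hd with hi
        have hiF : i ∈ F := by
          rw [hF]
          refine Finset.mem_insert_of_mem (Finset.mem_insert_of_mem ?_)
          exact Finset.mem_image.mpr ⟨⟨d, hdmem⟩, Finset.mem_attach _ _, rfl⟩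
        have hbi : b i = a i := hbF i hiF
        have hwit := hw d hd
        rw [← hi] at hwit
        have hiff2 : a i = 1 ↔ (d : ℤ) ∣ i - p := by
          rw [← hbi, hr i]
          constructor
          · intro h
            have : i - p = (i - r) - (p - r) := by ring
            rw [this]; exact h.sub hdp
          · intro h
            have : i - r = (i - p) + (p - r) := by ring
            rw [this]; exact h.add hdp
        tauto
    have hopen : IsOpen ((↑F : Set ℤ).pi (fun i => {a i})) :=
      isOpen_set_pi F.finite_toSet (fun i _ => isOpen_discrete _)
    have hmem : a ∈ (↑F : Set ℤ).pi (fun i => {a i}) := fun i _ => rfl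
    exact Filter.mem_of_superset (hopen.mem_nhds hmem) hsub
  · -- invariance
    have hσeq : ∀ a : ℤ → Fin 2, σ a = fun i => a (i + 1) := by
      intro a; funext i; exact hσ a i
    apply Set.eq_of_subset_of_subset
    · rintro _ ⟨a, ha, rfl⟩
      rw [hσeq]
      exact hshift 1 a ha
    · intro a ha
      refine ⟨fun i => a (i + (-1)), hshift (-1) a ha, ?_⟩
      rw [hσeq]
      funext i
      simp
  · -- counting
    intro n hn
    classical
    set T : Finset (ℤ → Fin 2) :=
      insert (fun _ => (0 : Fin 2))
        ((n.divisors.sigma fun d => Finset.range d).image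
          (fun p => ap p.1 (p.2 : ℤ))) with hT
    have hkey : {a : ℤ → Fin 2 | a ∈ S ∧ σ^[n] a = a} = ↑T := by
      ext a
      simp only [Set.mem_setOf_eq, Finset.coe_insert, Set.mem_insert_iff,
        Finset.coe_image, Set.mem_image, Finset.mem_coe, Finset.mem_sigma,
        Finset.mem_range, hT]
      constructor
      · rintro ⟨ha, hper⟩
        have hper' : ∀ i : ℤ, a (i + n) = a i := by
          intro i
          conv_rhs => rw [← hper]
          rw [hiter]
        rw [hS] at ha
        rcases ha with ⟨i0, h1, hu⟩ | h0 | ⟨d, hd, r, hr⟩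
        · exfalso
          have : a (i0 + n) = 1 := by rw [hper' i0]; exact h1
          have := hu (i0 + n) this
          omega
        · left; funext i; exact h0 i
        · right
          have hdn : d ∣ n := by
            have har : a r = 1 := (hr r).mpr (by simp)
            have : a (r + n) = 1 := by rw [hper']; exact har
            have hd2 : (d : ℤ) ∣ (r + n - r) := (hr _).mp this
            simp only [add_sub_cancel_left] at hd2
            exact_mod_cast hd2
          refine ⟨⟨d, (r % d).toNat⟩, ⟨Nat.mem_divisors.mpr ⟨hdn, hn.ne'⟩, ?_⟩, ?_⟩
          · show (r % (d:ℤ)).toNat < d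
            have h1 : (0:ℤ) ≤ r % d := Int.emod_nonneg r (by exact_mod_cast hd.ne')
            have h2 : r % d < d := Int.emod_lt_of_pos r (by exact_mod_cast hd)
            omega
          · have hcast : ((r % (d:ℤ)).toNat : ℤ) = r % d := by
              have : (0:ℤ) ≤ r % d := Int.emod_nonneg r (by exact_mod_cast hd.ne')
              omega
            have hdvd : (d : ℤ) ∣ r - (r % (d:ℤ)).toNat := by
              rw [hcast]; exact Int.dvd_self_sub_of_emod_eq rfl
            funext i
            have hiff : ap d ((r % (d:ℤ)).toNat : ℤ) i = 1 ↔ a i = 1 := by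
              rw [ap_eq_one_iff, hr i]
              constructor
              · intro h
                have : i - r = (i - ((r % (d:ℤ)).toNat : ℤ)) - (r - ((r % (d:ℤ)).toNat : ℤ)) := by ring
                rw [this]; exact h.sub hdvd
              · intro h
                have : i - ((r % (d:ℤ)).toNat : ℤ) = (i - r) + (r - ((r % (d:ℤ)).toNat : ℤ)) := by ring
                rw [this]; exact h.add hdvd
            rcases fin2_cases (a i) with h' | h' <;>
              rcases fin2_cases (ap d ((r % (d:ℤ)).toNat : ℤ) i) with h | h
            · rw [h', h]
            · exact absurd (hiff.mp h) (by rw [h']; decide)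
            · exact absurd (hiff.mpr h') (by rw [h]; decide)
            · rw [h', h]
      · rintro (rfl | ⟨⟨d, r⟩, ⟨hdmem, hrlt⟩, rfl⟩)
        · constructor
          · rw [hS]; right; left; intro i; rfl
          · funext i; rw [hiter]
        · obtain ⟨hdn, hn0⟩ := Nat.mem_divisors.mp hdmem
          have hdpos : 0 < d := Nat.pos_of_dvd_of_pos hdn hn
          constructor
          · rw [hS]; right; right
            exact ⟨d, hdpos, (r : ℤ), fun i => ap_eq_one_iff⟩
          · funext i
            rw [hiter]
            have hdn' : (d : ℤ) ∣ (n : ℤ) := Int.natCast_dvd_natCast.mpr hdn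
            unfold ap
            have hiff : (d : ℤ) ∣ i + n - r ↔ (d : ℤ) ∣ i - r := by
              constructor
              · intro h
                have : i - r = (i + n - r) - n := by ring
                rw [this]; exact h.sub hdn'
              · intro h
                have : i + n - r = (i - r) + n := by ring
                rw [this]; exact h.add hdn'
            simp only [hiff]
    rw [hkey]
    have hnotmem : (fun _ => (0 : Fin 2)) ∉
        ((n.divisors.sigma fun d => Finset.range d).image (fun p => ap p.1 (p.2 : ℤ))) := by
      simp only [Finset.mem_image, not_exists, not_and]
      rintro ⟨d, r⟩ hmem heq
      have h1 : ap d (r : ℤ) (r : ℤ) = 1 := ap_eq_one_iff.mpr (by simp)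
      have h2 : ap d (r : ℤ) (r : ℤ) = 0 := congrFun heq (r : ℤ)
      exact absurd (h1.symm.trans h2) (by decide)
    have hinj : Set.InjOn (fun p : (_ : ℕ) × ℕ => ap p.1 (p.2 : ℤ))
        ↑(n.divisors.sigma fun d => Finset.range d) := by
      rintro ⟨d, r⟩ hmem ⟨d', r'⟩ hmem' heq
      simp only [Finset.coe_sigma, Set.mem_sigma_iff, Finset.mem_coe,
        Finset.mem_range, Nat.mem_divisors] at hmem hmem'
      have hdpos : 0 < d := Nat.pos_of_dvd_of_pos hmem.1.1 hn
      have hd'pos : 0 < d' := Nat.pos_of_dvd_of_pos hmem'.1.1 hn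
      have heq' : ap d (r : ℤ) = ap d' (r' : ℤ) := heq
      have key : ∀ i : ℤ, ((d : ℤ) ∣ i - r ↔ (d' : ℤ) ∣ i - r') := by
        intro i
        rw [← ap_eq_one_iff, ← ap_eq_one_iff, heq']
      have h1 : (d' : ℤ) ∣ (r : ℤ) - r' := (key r).mp (by simp)
      have h2 : (d' : ℤ) ∣ (r : ℤ) + d - r' := (key (r + d)).mp (by simp)
      have h3 : (d' : ℤ) ∣ (d : ℤ) := by
        have := h2.sub h1; simpa using this
      have h4 : (d : ℤ) ∣ (r' : ℤ) - r := (key (r' : ℤ)).mpr (by simp)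
      have h5 : (d : ℤ) ∣ (r' : ℤ) + d' - r := (key ((r' : ℤ) + d')).mpr (by simp)
      have h6 : (d : ℤ) ∣ (d' : ℤ) := by
        have := h5.sub h4; simpa using this
      have hdd : d = d' := Nat.dvd_antisymm
        (Int.natCast_dvd_natCast.mp h6) (Int.natCast_dvd_natCast.mp h3)
      subst hdd
      have hrr : (r : ℤ) - r' = 0 := by
        apply Int.eq_zero_of_abs_lt_dvd h1
        have := hmem.2; have := hmem'.2
        rw [abs_lt]
        constructor <;> omega
      have : r = r' := by omega
      simp [this]
    rw [Nat.card_coe_set_eq, Set.ncard_coe_finset, hT,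
      Finset.card_insert_of_notMem hnotmem, Finset.card_image_of_injOn hinj,
      Finset.card_sigma]
    simp
end

section
/- If (X,d) is a compact metric space and f : X → X is an expansive continuous map, then there is r ∈ ℕ such that N_n(f) ≤ r^n for all n; consequently the zeta function ζ_f has radius of convergence at least 1/r > 0. -/
/-!
Cover `X` by finitely many `ε/2`-balls and code every point by the centre of a ball containing
it. A point of period `n` is determined by the codes of `x, f x, …, f^[n-1] x`: two periodic
points with the same codes stay `ε`-close along their whole orbits, so they coincide by
expansiveness. Hence `N_n(f) ≤ sⁿ` for `s` the number of balls, and the series `∑ N_n(f) tⁿ / n`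
is dominated by a geometric series.
-/

open Function Metric

section Itinerary

variable {X ι : Type*} [MetricSpace X]

def IsExpansiveWith (f : X → X) (ε : ℝ) : Prop :=
  ∀ x y, (∀ n, dist (f^[n] x) (f^[n] y) ≤ ε) → x = y

def itinerary (c : X → ι) (f : X → X) (n : ℕ) (x : X) : Fin n → ι :=
  fun k => c (f^[k] x)

variable {c : X → ι} {ε : ℝ} {f : X → X} {n : ℕ}

lemma dist_iterate_le_of_itinerary_eq (hc : ∀ x y, c x = c y → dist x y ≤ ε) (hn : 0 < n)
    {x y : X} (hx : IsPeriodicPt f n x) (hy : IsPeriodicPt f n y)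
    (hxy : itinerary c f n x = itinerary c f n y) (m : ℕ) :
    dist (f^[m] x) (f^[m] y) ≤ ε := by
  rw [← hx.iterate_mod_apply m, ← hy.iterate_mod_apply m]
  exact hc _ _ (congrFun hxy ⟨m % n, Nat.mod_lt m hn⟩)

lemma injOn_itinerary_ptsOfPeriod (hc : ∀ x y, c x = c y → dist x y ≤ ε)
    (hexp : IsExpansiveWith f ε) (hn : 0 < n) :
    Set.InjOn (itinerary c f n) (ptsOfPeriod f n) :=
  fun x hx y hy hxy => hexp x y (dist_iterate_le_of_itinerary_eq hc hn hx hy hxy)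

lemma card_ptsOfPeriod_le_pow [Fintype ι] (hc : ∀ x y, c x = c y → dist x y ≤ ε)
    (hexp : IsExpansiveWith f ε) (hn : 0 < n) :
    Nat.card (ptsOfPeriod f n) ≤ Fintype.card ι ^ n := by
  calc Nat.card (ptsOfPeriod f n) ≤ Nat.card (Fin n → ι) :=
        Nat.card_le_card_of_injective _
          (Set.injOn_iff_injective.1 (injOn_itinerary_ptsOfPeriod hc hexp hn))
    _ = Fintype.card ι ^ n := by simp [Nat.card_eq_fintype_card]

end Itinerary

lemma exists_finset_coding_of_compactSpace {X : Type*} [MetricSpace X] [CompactSpace X]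
    {ε : ℝ} (hε : 0 < ε) : ∃ (s : Finset X) (c : X → s), ∀ x y, c x = c y → dist x y ≤ ε := by
  obtain ⟨s, -, hs⟩ := isCompact_univ.elim_nhds_subcover (fun x : X => ball x (ε / 2))
    (fun x _ => ball_mem_nhds x (half_pos hε))
  have hcover : ∀ x : X, ∃ y : s, x ∈ ball (y : X) (ε / 2) := fun x => by
    simpa using hs (Set.mem_univ x)
  choose c hc using hcover
  refine ⟨s, c, fun x y hxy => ?_⟩
  have hy := hc y
  rw [← hxy, mem_ball'] at hy
  linarith [dist_triangle x (c x) y, mem_ball.1 (hc x)]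

lemma summable_div_mul_pow_succ_of_norm_le_pow {𝕜 : Type*} [RCLike 𝕜] {a : ℕ → 𝕜} {r : ℝ}
    (ha : ∀ n, 0 < n → ‖a n‖ ≤ r ^ n) {t : 𝕜} (ht : r * ‖t‖ < 1) :
    Summable fun n : ℕ => a (n + 1) / (n + 1) * t ^ (n + 1) := by
  have hr : 0 ≤ r := by simpa using (norm_nonneg _).trans (ha 1 one_pos)
  have hgeom : Summable fun n : ℕ => (r * ‖t‖) ^ (n + 1) :=
    (summable_nat_add_iff 1).2 (summable_geometric_of_lt_one (by positivity) ht)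
  refine hgeom.of_norm_bounded fun n => ?_
  have hn : ‖(n : 𝕜) + 1‖ = n + 1 := by exact_mod_cast RCLike.norm_natCast (K := 𝕜) (n + 1)
  calc ‖a (n + 1) / (n + 1) * t ^ (n + 1)‖ = ‖a (n + 1)‖ / (n + 1) * ‖t‖ ^ (n + 1) := by
        rw [norm_mul, norm_div, norm_pow, hn]
    _ ≤ ‖a (n + 1)‖ * ‖t‖ ^ (n + 1) := by
        gcongr
        exact div_le_self (norm_nonneg _) (by linarith [n.cast_nonneg (α := ℝ)])
    _ ≤ r ^ (n + 1) * ‖t‖ ^ (n + 1) := by gcongr; exact ha _ n.succ_pos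
    _ = (r * ‖t‖) ^ (n + 1) := (mul_pow _ _ _).symm

theorem expansive_zeta_positive_radius_general {X : Type*} [MetricSpace X] [CompactSpace X]
    (f : X → X) (ε : ℝ) (hε : 0 < ε)
    (hexp : ∀ x y : X, (∀ n : ℕ, dist (f^[n] x) (f^[n] y) ≤ ε) → x = y) :
    ∃ r : ℕ, 0 < r ∧
      (∀ n : ℕ, 0 < n → Nat.card {x : X | f^[n] x = x} ≤ r ^ n) ∧
      ∀ t : ℂ, ‖t‖ < 1 / r →
        Summable (fun n : ℕ =>
          ((Nat.card {x : X | f^[n + 1] x = x} : ℂ) / (n + 1)) * t ^ (n + 1)) := by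
  obtain ⟨s, c, hc⟩ := exists_finset_coding_of_compactSpace (X := X) hε
  have hcard (n : ℕ) (hn : 0 < n) : Nat.card {x : X | f^[n] x = x} ≤ (s.card + 1) ^ n := by
    have hpow := card_ptsOfPeriod_le_pow (f := f) hc hexp hn
    rw [Fintype.card_coe] at hpow
    exact hpow.trans (Nat.pow_le_pow_left s.card.le_succ n)
  refine ⟨s.card + 1, s.card.succ_pos, hcard, fun t ht => ?_⟩
  refine summable_div_mul_pow_succ_of_norm_le_pow (r := (s.card + 1 : ℕ))
    (a := fun n => (Nat.card {x : X | f^[n] x = x} : ℂ)) (fun n hn => ?_) ?_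
  · rw [Complex.norm_natCast]
    exact_mod_cast hcard n hn
  · rwa [lt_div_iff₀ (by positivity), mul_comm] at ht

/-- If `(X, d)` is a compact metric space and `f : X → X` is an expansive continuous map,
then there is `r ∈ ℕ` with `N_n(f) ≤ rⁿ` for all `n ≥ 1`; consequently the zeta function
`ζ_f` has radius of convergence at least `1/r > 0`. -/
theorem expansive_zeta_positive_radius {X : Type*} [MetricSpace X] [CompactSpace X]
    [Nonempty X] (f : X → X) (hf : Continuous f) (ε : ℝ) (hε : 0 < ε)
    (hexp : ∀ x y : X, (∀ n : ℕ, dist (f^[n] x) (f^[n] y) ≤ ε) → x = y) :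
    ∃ r : ℕ, 0 < r ∧
      (∀ n : ℕ, 0 < n → Nat.card {x : X | f^[n] x = x} ≤ r ^ n) ∧
      ∀ t : ℂ, ‖t‖ < 1 / r →
        Summable (fun n : ℕ =>
          ((Nat.card {x : X | f^[n + 1] x = x} : ℂ) / (n + 1)) * t ^ (n + 1)) :=
  expansive_zeta_positive_radius_general f ε hε hexp
end

section
/- Shadowing lemma for Ruelle-expanding maps: Let f : K → K be Ruelle-expanding with constants r, λ, c on a compact metric space. For any β ∈ (0, r), any α < min{r − β, (1−λ)/λ · β} satisfies: every α-pseudo-orbit (x_n)_{n≥0} (i.e., d(f(x_n), x_{n+1}) < α for all n) admits a β-shadow, i.e., a point x ∈ K with d(f^n(x), x_n) ≤ β for all n. Moreover, if β < ε/2 where ε is an expansive constant for f, the shadow is unique. -/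
/-- A continuous map of a compact metric space is Ruelle-expanding with constants
`r`, `lam`, `c` if distinct points with the same image are at distance `> c`, and every
preimage of a point `x` extends to a contractive inverse branch on the ball `B_r(x)`. -/
def RuelleExpanding {K : Type*} [MetricSpace K] (f : K → K) (r lam c : ℝ) : Prop :=
  0 < r ∧ 0 < lam ∧ lam < 1 ∧ 0 < c ∧
  (∀ x y : K, x ≠ y → f x = f y → c < dist x y) ∧
  (∀ x a : K, f a = x →
    ∃ φ : Metric.ball x r → K,
      (∀ hx : x ∈ Metric.ball x r, φ ⟨x, hx⟩ = a) ∧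
      (∀ y : Metric.ball x r, f (φ y) = (y : K)) ∧
      (∀ y z : Metric.ball x r, dist (φ y) (φ z) ≤ lam * dist (y : K) (z : K)))

/-!
Pull a pseudo-orbit back along inverse branches: if `y` is `β`-close to `x (n + 1)`, then `y` lies
within `β + α < r` of `f (x n)`, so the inverse branch through `x n` gives a preimage of `y` that
is `λ (β + α) ≤ β`-close to `x n`. Starting at `x N` and pulling back `N` times yields a point
whose first `N` iterates `β`-shadow the pseudo-orbit; by compactness these finite shadows
accumulate at a genuine shadow. Two `β`-shadows of the same sequence stay `2β`-close forever,
so they coincide when `2β ≤ ε`.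
-/

open Function

section Shadowing

variable {K : Type*} [MetricSpace K] {f : K → K} {x : ℕ → K} {β : ℝ}

def IsPseudoOrbit (f : K → K) (α : ℝ) (x : ℕ → K) : Prop :=
  ∀ n, dist (f (x n)) (x (n + 1)) < α

def Shadows (f : K → K) (β : ℝ) (z : K) (x : ℕ → K) : Prop :=
  ∀ n, dist (f^[n] z) (x n) ≤ β

theorem exists_iterate_dist_le_of_lift (hβ : 0 ≤ β)
    (hlift : ∀ n y, dist y (x (n + 1)) ≤ β → ∃ b, f b = y ∧ dist b (x n) ≤ β) (N : ℕ) :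
    ∃ z, ∀ n ≤ N, dist (f^[n] z) (x n) ≤ β := by
  suffices h : ∀ k m, ∃ z, ∀ j ≤ k, dist (f^[j] z) (x (m + j)) ≤ β by
    simpa only [zero_add] using h N 0
  intro k
  induction k with
  | zero => exact fun m => ⟨x m, by simp [hβ]⟩
  | succ k ih =>
    intro m
    obtain ⟨z', hz'⟩ := ih (m + 1)
    obtain ⟨z, rfl, hz⟩ := hlift m z' (by simpa using hz' 0 k.zero_le)
    refine ⟨z, fun j hj => ?_⟩
    cases j with
    | zero => simpa using hz
    | succ j =>
      rw [iterate_succ_apply, ← add_assoc, add_right_comm]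
      exact hz' j (by omega)

theorem exists_shadows_of_forall_exists_iterate_dist_le [CompactSpace K] (hf : Continuous f)
    (h : ∀ N, ∃ z, ∀ n ≤ N, dist (f^[n] z) (x n) ≤ β) : ∃ z, Shadows f β z x := by
  let C : ℕ → Set K := fun N => ⋂ n ≤ N, {z | dist (f^[n] z) (x n) ≤ β}
  have hclosed (N : ℕ) : IsClosed (C N) :=
    isClosed_biInter fun n _ => isClosed_le (by fun_prop) continuous_const
  obtain ⟨z, hz⟩ := IsCompact.nonempty_iInter_of_sequence_nonempty_isCompact_isClosed C
    (fun N => Set.biInter_subset_biInter_left fun n hn => Nat.le_succ_of_le hn)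
    (fun N => by simpa [C, Set.Nonempty] using h N) (hclosed 0).isCompact hclosed
  simp only [C, Set.mem_iInter, Set.mem_ofPred_eq] at hz
  exact ⟨z, fun n => hz n n le_rfl⟩

theorem Shadows.eq {ε : ℝ} (hexp : ∀ u v, (∀ n, dist (f^[n] u) (f^[n] v) ≤ ε) → u = v)
    (hβε : 2 * β ≤ ε) {z z' : K} (hz : Shadows f β z x) (hz' : Shadows f β z' x) : z = z' :=
  hexp z z' fun n => calc
    dist (f^[n] z) (f^[n] z') ≤ dist (f^[n] z) (x n) + dist (f^[n] z') (x n) :=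
      dist_triangle_right _ _ _
    _ ≤ ε := by linarith [hz n, hz' n]

end Shadowing

namespace RuelleExpanding

variable {K : Type*} [MetricSpace K] {f : K → K} {r lam c : ℝ}

theorem exists_preimage_dist_le (hR : RuelleExpanding f r lam c) {a y : K}
    (hy : dist y (f a) < r) : ∃ b, f b = y ∧ dist b a ≤ lam * dist y (f a) := by
  obtain ⟨φ, hφa, hφf, hφlip⟩ := hR.2.2.2.2.2 (f a) a rfl
  have hcen : f a ∈ Metric.ball (f a) r := Metric.mem_ball_self hR.1
  refine ⟨φ ⟨y, hy⟩, hφf _, ?_⟩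
  simpa only [hφa hcen] using hφlip ⟨y, hy⟩ ⟨f a, hcen⟩

theorem exists_preimage_dist_le_of_isPseudoOrbit (hR : RuelleExpanding f r lam c)
    {x : ℕ → K} {α β : ℝ} (hαβ : β + α < r) (hcontr : lam * (β + α) ≤ β)
    (hx : IsPseudoOrbit f α x) (n : ℕ) (y : K) (hy : dist y (x (n + 1)) ≤ β) :
    ∃ b, f b = y ∧ dist b (x n) ≤ β := by
  have hyf : dist y (f (x n)) ≤ β + α := calc
    dist y (f (x n)) ≤ dist y (x (n + 1)) + dist (f (x n)) (x (n + 1)) :=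
      dist_triangle_right _ _ _
    _ ≤ β + α := add_le_add hy (hx n).le
  obtain ⟨b, hb, hba⟩ := hR.exists_preimage_dist_le (hyf.trans_lt hαβ)
  exact ⟨b, hb, hba.trans ((mul_le_mul_of_nonneg_left hyf hR.2.1.le).trans hcontr)⟩

theorem exists_shadows [CompactSpace K] (hR : RuelleExpanding f r lam c) (hf : Continuous f)
    {x : ℕ → K} {α β : ℝ} (hβ : 0 ≤ β) (hαβ : β + α < r) (hcontr : lam * (β + α) ≤ β)
    (hx : IsPseudoOrbit f α x) : ∃ z, Shadows f β z x :=
  exists_shadows_of_forall_exists_iterate_dist_le hf <|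
    exists_iterate_dist_le_of_lift hβ <| hR.exists_preimage_dist_le_of_isPseudoOrbit hαβ hcontr hx

end RuelleExpanding

theorem ruelle_expanding_shadowing_general {K : Type*} [MetricSpace K] [CompactSpace K]
    (f : K → K) (hf : Continuous f) (r lam c : ℝ)
    (hR : RuelleExpanding f r lam c)
    (β : ℝ) (hβ0 : 0 < β)
    (α : ℝ) (hα : α < min (r - β) ((1 - lam) / lam * β)) :
    (∀ x : ℕ → K, (∀ n : ℕ, dist (f (x n)) (x (n + 1)) < α) →
      ∃ z : K, ∀ n : ℕ, dist (f^[n] z) (x n) ≤ β) ∧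
    (∀ ε : ℝ, (∀ u v : K, (∀ n : ℕ, dist (f^[n] u) (f^[n] v) ≤ ε) → u = v) →
      β < ε / 2 →
      ∀ x : ℕ → K, (∀ n : ℕ, dist (f (x n)) (x (n + 1)) < α) →
      ∀ z z' : K, (∀ n : ℕ, dist (f^[n] z) (x n) ≤ β) →
        (∀ n : ℕ, dist (f^[n] z') (x n) ≤ β) → z = z') := by
  have hαβ : β + α < r := by linarith [min_le_left (r - β) ((1 - lam) / lam * β)]
  have hcontr : lam * (β + α) ≤ β := by
    have h := hα.trans_le (min_le_right _ _)
    rw [div_mul_eq_mul_div, lt_div_iff₀ hR.2.1] at h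
    linarith
  exact ⟨fun x hx => hR.exists_shadows hf hβ0.le hαβ hcontr hx,
    fun ε hexp hβε x _ z z' hz hz' => Shadows.eq hexp (by linarith) hz hz'⟩

/-- Shadowing lemma for Ruelle-expanding maps: for `β ∈ (0, r)` any
`α < min {r - β, ((1 - λ)/λ) β}` works: every `α`-pseudo-orbit admits a `β`-shadow;
moreover, if `β < ε/2` for an expansive constant `ε`, the shadow is unique. -/
theorem ruelle_expanding_shadowing {K : Type*} [MetricSpace K] [CompactSpace K]
    (f : K → K) (hf : Continuous f) (r lam c : ℝ)
    (hR : RuelleExpanding f r lam c)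
    (β : ℝ) (hβ0 : 0 < β) (hβr : β < r)
    (α : ℝ) (hα0 : 0 < α) (hα : α < min (r - β) ((1 - lam) / lam * β)) :
    (∀ x : ℕ → K, (∀ n : ℕ, dist (f (x n)) (x (n + 1)) < α) →
      ∃ z : K, ∀ n : ℕ, dist (f^[n] z) (x n) ≤ β) ∧
    (∀ ε : ℝ, (∀ u v : K, (∀ n : ℕ, dist (f^[n] u) (f^[n] v) ≤ ε) → u = v) →
      β < ε / 2 →
      ∀ x : ℕ → K, (∀ n : ℕ, dist (f (x n)) (x (n + 1)) < α) →
      ∀ z z' : K, (∀ n : ℕ, dist (f^[n] z) (x n) ≤ β) →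
        (∀ n : ℕ, dist (f^[n] z') (x n) ≤ β) → z = z') :=
  ruelle_expanding_shadowing_general f hf r lam c hR β hβ0 α hα
end

section
/- With the Markov cover and coding map Π : Σ_A^+ → K defined by {Π(a)} = ⋂_{n≥0} f^{-n}(R_{a_n}), every point of K has at most k preimages under Π, where k is the number of elements of the cover. Moreover, if (a_0,...,a_n) and (b_0,...,b_n) are admissible sequences with a_n = b_n and R_{a_i} ∩ R_{b_i} ≠ ∅ for all i, then the sequences are equal. -/
open Set Filter Metric

theorem Set.ncard_le_natCard_of_eq_imp_eqOn_Iic {α : Type*} [Finite α] (S : Set (ℕ → α))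
    (hS : ∀ a ∈ S, ∀ b ∈ S, ∀ n, a n = b n → EqOn a b (Iic n)) :
    S.ncard ≤ Nat.card α := by
  rcases S.finite_or_infinite with hfin | hinf
  · have hsep : ∀ᶠ n in atTop, ∀ a ∈ S, ∀ b ∈ S, a ≠ b → a n ≠ b n := by
      simp only [eventually_all_finite hfin, eventually_imp_distrib_left]
      intro a ha b hb hab
      obtain ⟨m, hm⟩ := Function.ne_iff.1 hab
      exact eventually_atTop.2 ⟨m, fun n hmn hn => hm (hS a ha b hb n hn hmn)⟩
    obtain ⟨N, hN⟩ := hsep.exists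
    rw [← ncard_univ]
    exact ncard_le_ncard_of_injOn (fun a => a N) (fun _ _ => mem_univ _)
      (fun a ha b hb hab => by_contra fun hne => hN a ha b hb hne hab) finite_univ
  · simp [hinf.ncard]

theorem dist_lt_of_mem_of_inter_nonempty {α : Type*} [PseudoMetricSpace α] {A B : Set α}
    {c : ℝ} (hAb : Bornology.IsBounded A) (hBb : Bornology.IsBounded B) (hA : diam A < c / 2)
    (hB : diam B < c / 2) (hAB : (A ∩ B).Nonempty) {p q : α} (hp : p ∈ A) (hq : q ∈ B) :
    dist p q < c :=
  calc dist p q ≤ diam (A ∪ B) := dist_le_diam_of_mem (hAb.union hBb) (Or.inl hp) (Or.inr hq)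
    _ ≤ diam A + diam B := diam_union' hAB
    _ < c := by linarith

/-- The transition matrix of the cover: `A i j = 1` iff `f (int R_i)` meets `int R_j`. -/
def MarkovTransition {K : Type*} [TopologicalSpace K] {k : ℕ} (f : K → K) (R : Fin k → Set K)
    (i j : Fin k) : Prop :=
  (f '' interior (R i) ∩ interior (R j)).Nonempty

/-- A Markov cover by sets of diameter `< c / 2` for a map whose fibres are `c`-separated. -/
structure SeparatedMarkovCover {K : Type*} [MetricSpace K] {k : ℕ} (f : K → K)
    (R : Fin k → Set K) (c : ℝ) : Prop where
  lt_dist_of_map_eq : ∀ x y : K, x ≠ y → f x = f y → c < dist x y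
  diam_lt : ∀ i, diam (R i) < c / 2
  interior_inter_interior : ∀ i j, i ≠ j → interior (R i) ∩ interior (R j) = ∅
  interior_subset_image :
    ∀ i j, MarkovTransition f R i j → interior (R j) ⊆ f '' interior (R i)

namespace SeparatedMarkovCover

variable {K : Type*} [MetricSpace K] [CompactSpace K] {k : ℕ} {f : K → K} {R : Fin k → Set K}
  {c : ℝ}

theorem eq_of_markovTransition (hR : SeparatedMarkovCover f R c) {i j l : Fin k}
    (hi : MarkovTransition f R i l) (hj : MarkovTransition f R j l)
    (hij : (R i ∩ R j).Nonempty) : i = j := by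
  by_contra hne
  obtain ⟨_, ⟨p, hp, rfl⟩, hpl⟩ := hi
  obtain ⟨q, hq, hfq⟩ := hR.interior_subset_image j l hj hpl
  have hpq : p ≠ q := by
    rintro rfl
    exact (hR.interior_inter_interior i j hne).subset ⟨hp, hq⟩
  exact (hR.lt_dist_of_map_eq p q hpq hfq.symm).not_gt <|
    dist_lt_of_mem_of_inter_nonempty isBounded_of_compactSpace isBounded_of_compactSpace
      (hR.diam_lt i) (hR.diam_lt j) hij (interior_subset hp) (interior_subset hq)

theorem eq_of_last_eq (hR : SeparatedMarkovCover f R c) {n : ℕ} {a b : Fin (n + 1) → Fin k}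
    (ha : ∀ i : Fin n, MarkovTransition f R (a i.castSucc) (a i.succ))
    (hb : ∀ i : Fin n, MarkovTransition f R (b i.castSucc) (b i.succ))
    (hlast : a (Fin.last n) = b (Fin.last n)) (hmeet : ∀ i, (R (a i) ∩ R (b i)).Nonempty) :
    a = b := by
  funext i
  induction i using Fin.reverseInduction with
  | last => exact hlast
  | cast i ih => exact hR.eq_of_markovTransition (ha i) (ih ▸ hb i) (hmeet i.castSucc)

theorem eqOn_Iic_of_codes (hR : SeparatedMarkovCover f R c) {x : K} {a b : ℕ → Fin k}
    (ha : ∀ i, MarkovTransition f R (a i) (a (i + 1))) (hax : ∀ n, f^[n] x ∈ R (a n))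
    (hb : ∀ i, MarkovTransition f R (b i) (b (i + 1))) (hbx : ∀ n, f^[n] x ∈ R (b n))
    {n : ℕ} (hn : a n = b n) : EqOn a b (Iic n) := fun m hm =>
  congrFun (hR.eq_of_last_eq (a := fun i : Fin (n + 1) => a i) (b := fun i => b i)
    (fun i => ha i) (fun i => hb i) hn fun i => ⟨f^[i] x, hax i, hbx i⟩)
    ⟨m, Nat.lt_succ_of_le hm⟩

end SeparatedMarkovCover

theorem markov_coding_preimages_general {K : Type*} [MetricSpace K] [CompactSpace K]
    (f : K → K) (r lam c : ℝ)
    (hR : RuelleExpanding f r lam c)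
    (ε : ℝ)
    (k : ℕ) (R : Fin k → Set K)
    (hdiam : ∀ i, Metric.diam (R i) < min ε (c / 2))
    (hdisj : ∀ i j, i ≠ j → interior (R i) ∩ interior (R j) = ∅)
    (hmarkov : ∀ i j, (f '' interior (R i) ∩ interior (R j)).Nonempty →
      interior (R j) ⊆ f '' interior (R i)) :
    (∀ x : K, Nat.card {a : ℕ → Fin k //
        (∀ i : ℕ, (f '' interior (R (a i)) ∩ interior (R (a (i + 1)))).Nonempty) ∧
        ∀ n : ℕ, f^[n] x ∈ R (a n)} ≤ k) ∧
    (∀ (n : ℕ) (a b : Fin (n + 1) → Fin k),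
      (∀ i : Fin n,
        (f '' interior (R (a i.castSucc)) ∩ interior (R (a i.succ))).Nonempty) →
      (∀ i : Fin n,
        (f '' interior (R (b i.castSucc)) ∩ interior (R (b i.succ))).Nonempty) →
      a (Fin.last n) = b (Fin.last n) →
      (∀ i : Fin (n + 1), (R (a i) ∩ R (b i)).Nonempty) →
      a = b) := by
  obtain ⟨-, -, -, -, hsep, -⟩ := hR
  have hmc : SeparatedMarkovCover f R c :=
    ⟨hsep, fun i => (hdiam i).trans_le (min_le_right _ _), hdisj, hmarkov⟩
  refine ⟨fun x => ?_, fun n a b => hmc.eq_of_last_eq⟩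
  have hcodes := ncard_le_natCard_of_eq_imp_eqOn_Iic
    {a : ℕ → Fin k | (∀ i, MarkovTransition f R (a i) (a (i + 1))) ∧ ∀ n, f^[n] x ∈ R (a n)}
    fun a ha b hb _ => hmc.eqOn_Iic_of_codes ha.1 ha.2 hb.1 hb.2
  rwa [Nat.card_eq_fintype_card, Fintype.card_fin, ← Nat.card_coe_set_eq] at hcodes

/-- With the Markov cover `{R_1, …, R_k}` and the coding map `Π : Σ_A⁺ → K` given by
`{Π(a)} = ⋂_{n ≥ 0} f^{-n}(R_{a_n})` (so that `Π(a) = x ↔ ∀ n, fⁿ(x) ∈ R_{a_n}`), every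
point of `K` has at most `k` preimages under `Π`. Moreover, two admissible sequences
`(a_0, …, a_n)` and `(b_0, …, b_n)` with `a_n = b_n` and `R_{a_i} ∩ R_{b_i} ≠ ∅` for all
`i` are equal. -/
theorem markov_coding_preimages {K : Type*} [MetricSpace K] [CompactSpace K]
    (f : K → K) (hf : Continuous f) (r lam c : ℝ)
    (hR : RuelleExpanding f r lam c)
    (ε : ℝ) (hε : 0 < ε)
    (hexp : ∀ x y : K, (∀ n : ℕ, dist (f^[n] x) (f^[n] y) ≤ ε) → x = y)
    (k : ℕ) (R : Fin k → Set K)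
    (hcover : ⋃ i, R i = Set.univ)
    (hproper : ∀ i, closure (interior (R i)) = R i)
    (hdiam : ∀ i, Metric.diam (R i) < min ε (c / 2))
    (hdisj : ∀ i j, i ≠ j → interior (R i) ∩ interior (R j) = ∅)
    (hmarkov : ∀ i j, (f '' interior (R i) ∩ interior (R j)).Nonempty →
      interior (R j) ⊆ f '' interior (R i)) :
    (∀ x : K, Nat.card {a : ℕ → Fin k //
        (∀ i : ℕ, (f '' interior (R (a i)) ∩ interior (R (a (i + 1)))).Nonempty) ∧
        ∀ n : ℕ, f^[n] x ∈ R (a n)} ≤ k) ∧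
    (∀ (n : ℕ) (a b : Fin (n + 1) → Fin k),
      (∀ i : Fin n,
        (f '' interior (R (a i.castSucc)) ∩ interior (R (a i.succ))).Nonempty) →
      (∀ i : Fin n,
        (f '' interior (R (b i.castSucc)) ∩ interior (R (b i.succ))).Nonempty) →
      a (Fin.last n) = b (Fin.last n) →
      (∀ i : Fin (n + 1), (R (a i) ∩ R (b i)).Nonempty) →
      a = b) :=
  markov_coding_preimages_general f r lam c hR ε k R hdiam hdisj hmarkov
end
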